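/- arXiv:2201.05312 — 3 statements merged into one kernel-verified Lean document; each statement's English description precedes it below -/
import Mathlib

section
/- For every σ > 0 and τ > 0, the limit as K decreases to b > 0 of Φ(ln(b/K)/(σ√τ) + σ√τ) equals Φ(σ√τ), and Φ(σ√τ) > 1/2; consequently there exist K > b and r > 0 such that Φ(ln(b/K)/(σ√τ) + σ√τ) > 1/2 + (K/b) e^{-rτ} Φ(ln(b/K)/(σ√τ)). -/
open MeasureTheory ProbabilityTheory Filter

/-- The standard normal cumulative distribution function Φ. -/
noncomputable def stdNormalCDF (x : ℝ) : ℝ :=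
  ProbabilityTheory.cdf (ProbabilityTheory.gaussianReal 0 1) x


lemma continuous_stdNormalCDF : Continuous stdNormalCDF := by
  rw [continuous_iff_continuousAt]
  intro x
  show ContinuousAt (cdf (gaussianReal 0 1)) x
  set f := cdf (gaussianReal 0 1) with hf
  have hmono : Monotone f := monotone_cdf _
  rw [hmono.continuousAt_iff_leftLim_eq_rightLim, f.rightLim_eq]
  have hsing : f.measure {x} = 0 := by
    rw [measure_cdf]
    exact (gaussianReal_absolutelyContinuous 0 one_ne_zero) (Real.volume_singleton)
  rw [f.measure_singleton] at hsing
  have h1 : f x - Function.leftLim f x ≤ 0 := by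
    by_contra h
    push_neg at h
    rw [ENNReal.ofReal_eq_zero] at hsing
    linarith
  have h2 : Function.leftLim f x ≤ f x := hmono.leftLim_le le_rfl
  linarith

lemma stdNormalCDF_zero : stdNormalCDF 0 = 1 / 2 := by
  have hmap : (gaussianReal 0 1).map (fun x => (-1 : ℝ) * x) = gaussianReal 0 1 := by
    rw [gaussianReal_map_const_mul (-1)]
    norm_num
  have hIci : gaussianReal 0 1 (Set.Iic 0) = gaussianReal 0 1 (Set.Ici 0) := by
    conv_lhs => rw [← hmap]
    rw [Measure.map_apply (by fun_prop) measurableSet_Iic]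
    congr 1
    ext y
    simp
  have hIoi : gaussianReal 0 1 (Set.Ici 0) = gaussianReal 0 1 (Set.Ioi 0) := by
    rw [← Set.Ioi_union_left, measure_union (by simp) (by simp)]
    rw [(gaussianReal_absolutelyContinuous 0 one_ne_zero) (Real.volume_singleton)]
    simp
  have hcompl : gaussianReal 0 1 (Set.Ioi 0) = 1 - gaussianReal 0 1 (Set.Iic 0) := by
    rw [← Set.compl_Iic]
    rw [measure_compl measurableSet_Iic (measure_ne_top _ _)]
    simp
  have key : gaussianReal 0 1 (Set.Iic 0) = 1 - gaussianReal 0 1 (Set.Iic 0) :=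
    hIci.trans (hIoi.trans hcompl)
  have hle : gaussianReal 0 1 (Set.Iic 0) ≤ 1 := prob_le_one
  have htoReal : (gaussianReal 0 1 (Set.Iic 0)).toReal = 1 - (gaussianReal 0 1 (Set.Iic 0)).toReal := by
    conv_lhs => rw [key]
    rw [ENNReal.toReal_sub_of_le hle (by simp)]
    simp
  have : stdNormalCDF 0 = (gaussianReal 0 1 (Set.Iic 0)).toReal := cdf_eq_real _ _
  rw [this]
  linarith

lemma stdNormalCDF_gt_half {x : ℝ} (hx : 0 < x) : 1 / 2 < stdNormalCDF x := by
  have hsplit : gaussianReal 0 1 (Set.Iic x) =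
      gaussianReal 0 1 (Set.Iic 0) + gaussianReal 0 1 (Set.Ioc 0 x) := by
    rw [← measure_union (Set.Iic_disjoint_Ioc le_rfl) measurableSet_Ioc]
    · rw [Set.Iic_union_Ioc_eq_Iic hx.le]
  have hpos : 0 < gaussianReal 0 1 (Set.Ioc 0 x) := by
    rw [pos_iff_ne_zero]
    intro h
    have := (gaussianReal_absolutelyContinuous' 0 one_ne_zero) h
    rw [Real.volume_Ioc] at this
    simp [ENNReal.ofReal_eq_zero] at this
    linarith
  have h0 : stdNormalCDF 0 = (gaussianReal 0 1 (Set.Iic 0)).toReal := cdf_eq_real _ _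
  have hx' : stdNormalCDF x = (gaussianReal 0 1 (Set.Iic x)).toReal := cdf_eq_real _ _
  have hfin : gaussianReal 0 1 (Set.Ioc 0 x) ≠ ⊤ := measure_ne_top _ _
  have hfin0 : gaussianReal 0 1 (Set.Iic 0) ≠ ⊤ := measure_ne_top _ _
  have : stdNormalCDF x = stdNormalCDF 0 + (gaussianReal 0 1 (Set.Ioc 0 x)).toReal := by
    rw [hx', h0, hsplit, ENNReal.toReal_add hfin0 hfin]
  rw [this, stdNormalCDF_zero]
  have : 0 < (gaussianReal 0 1 (Set.Ioc 0 x)).toReal := ENNReal.toReal_pos hpos.ne' hfin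
  linarith

/-- For every σ > 0 and τ > 0, the limit as K decreases to b > 0 of
Φ(ln(b/K)/(σ√τ) + σ√τ) equals Φ(σ√τ), and Φ(σ√τ) > 1/2; consequently there exist
K > b and r > 0 such that
Φ(ln(b/K)/(σ√τ) + σ√τ) > 1/2 + (K/b) e^{-rτ} Φ(ln(b/K)/(σ√τ)). -/
theorem stmt_4 (σ τ b : ℝ) (hσ : 0 < σ) (hτ : 0 < τ) (hb : 0 < b) :
    Tendsto (fun K : ℝ =>
        stdNormalCDF (Real.log (b / K) / (σ * Real.sqrt τ) + σ * Real.sqrt τ))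
      (nhdsWithin b (Set.Ioi b)) (nhds (stdNormalCDF (σ * Real.sqrt τ))) ∧
    1 / 2 < stdNormalCDF (σ * Real.sqrt τ) ∧
    ∃ K > b, ∃ r > (0 : ℝ),
      1 / 2 + (K / b) * Real.exp (-r * τ) * stdNormalCDF (Real.log (b / K) / (σ * Real.sqrt τ))
        < stdNormalCDF (Real.log (b / K) / (σ * Real.sqrt τ) + σ * Real.sqrt τ) := by
  have hst : 0 < σ * Real.sqrt τ := mul_pos hσ (Real.sqrt_pos.mpr hτ)
  have harg : Tendsto (fun K : ℝ => Real.log (b / K) / (σ * Real.sqrt τ) + σ * Real.sqrt τ)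
      (nhdsWithin b (Set.Ioi b)) (nhds (σ * Real.sqrt τ)) := by
    have h0 : ContinuousAt (fun K : ℝ => b / K) b :=
      continuousAt_const.div continuousAt_id hb.ne'
    have hlog : ContinuousAt (fun K : ℝ => Real.log (b / K)) b :=
      (Real.continuousAt_log (by positivity : b / b ≠ 0)).comp h0
    have h1 : ContinuousAt
        (fun K : ℝ => Real.log (b / K) / (σ * Real.sqrt τ) + σ * Real.sqrt τ) b :=
      (hlog.div_const _).add continuousAt_const
    have h2 : Tendsto (fun K : ℝ => Real.log (b / K) / (σ * Real.sqrt τ) + σ * Real.sqrt τ)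
        (nhdsWithin b (Set.Ioi b))
        (nhds (Real.log (b / b) / (σ * Real.sqrt τ) + σ * Real.sqrt τ)) :=
      h1.tendsto.mono_left nhdsWithin_le_nhds
    simpa [div_self hb.ne'] using h2
  have htendsto : Tendsto (fun K : ℝ =>
      stdNormalCDF (Real.log (b / K) / (σ * Real.sqrt τ) + σ * Real.sqrt τ))
      (nhdsWithin b (Set.Ioi b)) (nhds (stdNormalCDF (σ * Real.sqrt τ))) :=
    (continuous_stdNormalCDF.continuousAt.tendsto).comp harg
  have hL : 1 / 2 < stdNormalCDF (σ * Real.sqrt τ) := stdNormalCDF_gt_half hst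
  refine ⟨htendsto, hL, ?_⟩
  set L := stdNormalCDF (σ * Real.sqrt τ) with hLdef
  have hLle : L ≤ 1 := cdf_le_one _ _
  set δ := (L - 1/2)/2 with hδdef
  have hδ : 0 < δ := by simp only [hδdef]; linarith
  have hδle : δ ≤ 1/4 := by simp only [hδdef]; linarith
  set r := Real.log (4/δ) / τ with hrdef
  have hr : 0 < r := by
    apply div_pos _ hτ
    apply Real.log_pos
    rw [lt_div_iff₀ hδ]; linarith
  have hexp : Real.exp (-r * τ) = δ/4 := by
    have : -r * τ = -Real.log (4/δ) := by
      rw [hrdef]; field_simp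
    rw [this, Real.exp_neg, Real.exp_log (by positivity)]
    rw [inv_div]
  have hev1 : ∀ᶠ K in nhdsWithin b (Set.Ioi b),
      1/2 + δ < stdNormalCDF (Real.log (b / K) / (σ * Real.sqrt τ) + σ * Real.sqrt τ) :=
    htendsto.eventually (eventually_gt_nhds (by simp only [hδdef]; linarith))
  have hev2 : ∀ᶠ K in nhdsWithin b (Set.Ioi b), K < 2*b :=
    (eventually_lt_nhds (by linarith : b < 2*b)).filter_mono nhdsWithin_le_nhds
  obtain ⟨K, hK1, hKmem, hK2⟩ :=
    (hev1.and (eventually_mem_nhdsWithin.and hev2)).exists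
  refine ⟨K, hKmem, r, hr, ?_⟩
  have hKb : b < K := hKmem
  have hKbdiv : K / b < 2 := by rw [div_lt_iff₀ hb]; linarith
  have hKbpos : 0 < K / b := div_pos (hb.trans hKb) hb
  have hΦ0 : (0:ℝ) ≤ stdNormalCDF (Real.log (b / K) / (σ * Real.sqrt τ)) := cdf_nonneg _ _
  have hΦ1 : stdNormalCDF (Real.log (b / K) / (σ * Real.sqrt τ)) ≤ 1 := cdf_le_one _ _
  rw [hexp]
  have h5 : K / b * (δ/4) * stdNormalCDF (Real.log (b / K) / (σ * Real.sqrt τ)) ≤ K / b * (δ/4) :=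
    mul_le_of_le_one_right (mul_nonneg hKbpos.le (by linarith)) hΦ1
  have h6 : K / b * (δ/4) ≤ 2 * (δ/4) := mul_le_mul_of_nonneg_right hKbdiv.le (by linarith)
  linarith
end

section
/- Fix b > 0, σ > 0, τ > 0 and set r = σ²/2. If K > b satisfies Φ(σ√τ) − Φ(ln(b/K)/(σ√τ) + σ√τ) > 1/2, then the RGBM put price at the boundary, P = K e^{-rτ}(1 − 2Φ(ln(b/K)/(σ√τ))) − 2b(Φ(σ√τ) − Φ(ln(b/K)/(σ√τ) + σ√τ)), satisfies P < K e^{-rτ} − b. -/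
open MeasureTheory ProbabilityTheory

/-- Fix b > 0, σ > 0, τ > 0 and set r = σ²/2. If K > b satisfies
Φ(σ√τ) − Φ(ln(b/K)/(σ√τ) + σ√τ) > 1/2, then the RGBM put price at the boundary,
P = K e^{-rτ}(1 − 2Φ(ln(b/K)/(σ√τ))) − 2b(Φ(σ√τ) − Φ(ln(b/K)/(σ√τ) + σ√τ)),
satisfies P < K e^{-rτ} − b. -/
theorem stmt_7 (b σ τ K r : ℝ) (hb : 0 < b) (hσ : 0 < σ) (hτ : 0 < τ)
    (hr : r = σ ^ 2 / 2) (hK : b < K)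
    (h : 1 / 2 < stdNormalCDF (σ * Real.sqrt τ)
        - stdNormalCDF (Real.log (b / K) / (σ * Real.sqrt τ) + σ * Real.sqrt τ)) :
    K * Real.exp (-r * τ) * (1 - 2 * stdNormalCDF (Real.log (b / K) / (σ * Real.sqrt τ)))
        - 2 * b * (stdNormalCDF (σ * Real.sqrt τ)
            - stdNormalCDF (Real.log (b / K) / (σ * Real.sqrt τ) + σ * Real.sqrt τ))
      < K * Real.exp (-r * τ) - b := by
  have h1 : 0 ≤ stdNormalCDF (Real.log (b / K) / (σ * Real.sqrt τ)) :=
    ProbabilityTheory.cdf_nonneg _ _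
  have h2 : 0 < K * Real.exp (-r * τ) :=
    mul_pos (hb.trans hK) (Real.exp_pos _)
  nlinarith [mul_nonneg (le_of_lt h2) h1]
end

section
/- Let σ > 0, r = 0, 0 < q < σ²/2, and θ = 2(r−q)/σ² = −2q/σ² ∈ (−1, 0). For fixed K > b > 0, the RGBM NNEG price P(τ) (as a function of time to maturity τ) converges as τ → ∞ to K + (b/θ)(1 − θ − (K/b)^θ), and this limit is strictly less than K. -/
open MeasureTheory ProbabilityTheory Filter

/-- z₁ in the RGBM NNEG pricing formula (with r = 0). -/
noncomputable def nnegZ1 (σ q S K τ : ℝ) : ℝ :=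
  (Real.log (S / K) + (-q + σ ^ 2 / 2) * τ) / (σ * Real.sqrt τ)

/-- z₂ in the RGBM NNEG pricing formula (with r = 0). -/
noncomputable def nnegZ2 (σ q b S K τ : ℝ) : ℝ :=
  (Real.log (b ^ 2 / (K * S)) + (-q + σ ^ 2 / 2) * τ) / (σ * Real.sqrt τ)

/-- z₃ in the RGBM NNEG pricing formula (with r = 0). -/
noncomputable def nnegZ3 (σ q b S τ : ℝ) : ℝ :=
  (Real.log (S / b) + (-q + σ ^ 2 / 2) * τ) / (σ * Real.sqrt τ)

/-- z₄ in the RGBM NNEG pricing formula (with r = 0). -/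
noncomputable def nnegZ4 (σ q b S τ : ℝ) : ℝ :=
  (Real.log (b / S) + (-q + σ ^ 2 / 2) * τ) / (σ * Real.sqrt τ)

/-- Thomas's RGBM NNEG pricing formula, with interest rate r = 0, deferment rate q,
volatility σ, reflecting boundary b, strike (rolled-up loan) K, current house price S,
time to maturity τ; here θ = 2(r − q)/σ² = −2q/σ². -/
noncomputable def nnegPrice (σ q b K S τ : ℝ) : ℝ :=
  let θ : ℝ := -(2 * q) / σ ^ 2
  K * stdNormalCDF (-nnegZ1 σ q S K τ + σ * Real.sqrt τ)
    - S * Real.exp (-q * τ) * stdNormalCDF (-nnegZ1 σ q S K τ)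
    - b * stdNormalCDF (-nnegZ3 σ q b S τ + σ * Real.sqrt τ)
    + S * Real.exp (-q * τ) * stdNormalCDF (-nnegZ3 σ q b S τ)
    + (1 / θ) * (b * stdNormalCDF (-nnegZ3 σ q b S τ + σ * Real.sqrt τ)
        - S * Real.exp (-q * τ) * ((b / S) ^ (1 + θ))
            * (stdNormalCDF (nnegZ4 σ q b S τ) - stdNormalCDF (nnegZ2 σ q b S K τ))
        - K * ((K / b) ^ (θ - 1))
            * stdNormalCDF (nnegZ2 σ q b S K τ - θ * σ * Real.sqrt τ))

private lemma nneg_aux1 (σ a c : ℝ) (hσ : 0 < σ) (ha : 0 < a) :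
    Tendsto (fun τ : ℝ => (c + a * τ) / (σ * Real.sqrt τ)) atTop atTop := by
  have hsq : Tendsto Real.sqrt atTop atTop := by
    apply tendsto_atTop_atTop.mpr
    intro B
    exact ⟨B ^ 2, fun τ hτ => by
      nlinarith [Real.sq_sqrt ((by nlinarith [sq_nonneg B] : (0:ℝ) ≤ τ)), Real.sqrt_nonneg τ]⟩
  have h1 : Tendsto (fun τ : ℝ => (c / σ) * (Real.sqrt τ)⁻¹ + (a / σ) * Real.sqrt τ)
      atTop atTop :=
    Filter.Tendsto.add_atTop ((hsq.inv_tendsto_atTop).const_mul _)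
      (hsq.const_mul_atTop (by positivity))
  apply h1.congr'
  filter_upwards [eventually_gt_atTop (0:ℝ)] with τ hτ
  have hs : Real.sqrt τ * Real.sqrt τ = τ := Real.mul_self_sqrt hτ.le
  have hs0 : Real.sqrt τ ≠ 0 := by positivity
  field_simp
  linear_combination a * hs

private lemma nneg_auxL1 (σ c d τ : ℝ) (hσ : σ ≠ 0) (hτ : 0 < τ) :
    -((c + d * τ) / (σ * Real.sqrt τ)) + σ * Real.sqrt τ
      = (-c + (σ ^ 2 - d) * τ) / (σ * Real.sqrt τ) := by
  have hs : Real.sqrt τ * Real.sqrt τ = τ := Real.mul_self_sqrt hτ.le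
  have hs0 : Real.sqrt τ ≠ 0 := by positivity
  rw [show -((c + d * τ) / (σ * Real.sqrt τ)) = (-(c + d * τ)) / (σ * Real.sqrt τ) from
      (neg_div _ _).symm,
    div_add' _ _ _ (mul_ne_zero hσ hs0)]
  congr 1
  linear_combination σ ^ 2 * hs

private lemma nneg_auxL3 (σ c d m τ : ℝ) (hσ : σ ≠ 0) (hτ : 0 < τ) :
    (c + d * τ) / (σ * Real.sqrt τ) - m * σ * Real.sqrt τ
      = (c + (d - m * σ ^ 2) * τ) / (σ * Real.sqrt τ) := by
  have hs : Real.sqrt τ * Real.sqrt τ = τ := Real.mul_self_sqrt hτ.le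
  have hs0 : Real.sqrt τ ≠ 0 := by positivity
  rw [div_sub' (mul_ne_zero hσ hs0)]
  congr 1
  linear_combination (-(m * σ ^ 2)) * hs

/-- Let σ > 0, r = 0, 0 < q < σ²/2, θ = −2q/σ² ∈ (−1, 0). For fixed K > b > 0, the RGBM
NNEG price P(τ) converges as τ → ∞ to K + (b/θ)(1 − θ − (K/b)^θ), and this limit is
strictly less than K. -/
theorem stmt_8 (σ q b K S θ : ℝ) (hσ : 0 < σ) (hq0 : 0 < q) (hq : q < σ ^ 2 / 2)
    (hb : 0 < b) (hK : b < K) (hS : b ≤ S) (hθ : θ = -(2 * q) / σ ^ 2) :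
    Tendsto (fun τ => nnegPrice σ q b K S τ) atTop
        (nhds (K + (b / θ) * (1 - θ - (K / b) ^ θ))) ∧
      K + (b / θ) * (1 - θ - (K / b) ^ θ) < K := by
  have hσ2 : (0:ℝ) < σ ^ 2 := by positivity
  have hθ0 : θ < 0 := by rw [hθ]; apply div_neg_of_neg_of_pos <;> [linarith; exact hσ2]
  have hθσ : θ * σ ^ 2 = -(2 * q) := by rw [hθ]; field_simp
  have hθne : θ ≠ 0 := ne_of_lt hθ0
  have hSpos : 0 < S := lt_of_lt_of_le hb hS
  have hKpos : 0 < K := lt_trans hb hK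
  have hKb : (0:ℝ) < K / b := by positivity
  have hΦ1 : Tendsto stdNormalCDF atTop (nhds 1) := ProbabilityTheory.tendsto_cdf_atTop _
  have hΦ0 : Tendsto stdNormalCDF atBot (nhds 0) := ProbabilityTheory.tendsto_cdf_atBot _
  -- z functions tend to atTop
  have hz1 : Tendsto (fun τ => nnegZ1 σ q S K τ) atTop atTop := by
    unfold nnegZ1; exact nneg_aux1 σ (-q + σ ^ 2 / 2) _ hσ (by linarith)
  have hz2 : Tendsto (fun τ => nnegZ2 σ q b S K τ) atTop atTop := by
    unfold nnegZ2; exact nneg_aux1 σ (-q + σ ^ 2 / 2) _ hσ (by linarith)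
  have hz3 : Tendsto (fun τ => nnegZ3 σ q b S τ) atTop atTop := by
    unfold nnegZ3; exact nneg_aux1 σ (-q + σ ^ 2 / 2) _ hσ (by linarith)
  have hz4 : Tendsto (fun τ => nnegZ4 σ q b S τ) atTop atTop := by
    unfold nnegZ4; exact nneg_aux1 σ (-q + σ ^ 2 / 2) _ hσ (by linarith)
  -- shifted arguments
  have hA1 : Tendsto (fun τ => -nnegZ1 σ q S K τ + σ * Real.sqrt τ) atTop atTop := by
    apply (nneg_aux1 σ (σ ^ 2 - (-q + σ ^ 2 / 2)) (-Real.log (S / K)) hσ (by nlinarith)).congr'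
    filter_upwards [eventually_gt_atTop (0:ℝ)] with τ hτ
    exact (by rw [nnegZ1, nneg_auxL1 _ _ _ _ hσ.ne' hτ])
  have hA3 : Tendsto (fun τ => -nnegZ3 σ q b S τ + σ * Real.sqrt τ) atTop atTop := by
    apply (nneg_aux1 σ (σ ^ 2 - (-q + σ ^ 2 / 2)) (-Real.log (S / b)) hσ (by nlinarith)).congr'
    filter_upwards [eventually_gt_atTop (0:ℝ)] with τ hτ
    exact (by rw [nnegZ3, nneg_auxL1 _ _ _ _ hσ.ne' hτ])
  have hA7 : Tendsto (fun τ => nnegZ2 σ q b S K τ - θ * σ * Real.sqrt τ) atTop atTop := by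
    apply (nneg_aux1 σ ((-q + σ ^ 2 / 2) - θ * σ ^ 2) (Real.log (b ^ 2 / (K * S))) hσ
      (by rw [hθσ]; linarith)).congr'
    filter_upwards [eventually_gt_atTop (0:ℝ)] with τ hτ
    exact (by rw [nnegZ2, nneg_auxL3 _ _ _ _ _ hσ.ne' hτ])
  -- Φ limits of each term
  have t1 : Tendsto (fun τ => stdNormalCDF (-nnegZ1 σ q S K τ + σ * Real.sqrt τ))
      atTop (nhds 1) := hΦ1.comp hA1
  have t2 : Tendsto (fun τ => stdNormalCDF (-nnegZ1 σ q S K τ)) atTop (nhds 0) :=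
    hΦ0.comp (tendsto_neg_atTop_atBot.comp hz1)
  have t3 : Tendsto (fun τ => stdNormalCDF (-nnegZ3 σ q b S τ + σ * Real.sqrt τ))
      atTop (nhds 1) := hΦ1.comp hA3
  have t4 : Tendsto (fun τ => stdNormalCDF (-nnegZ3 σ q b S τ)) atTop (nhds 0) :=
    hΦ0.comp (tendsto_neg_atTop_atBot.comp hz3)
  have t5 : Tendsto (fun τ => stdNormalCDF (nnegZ4 σ q b S τ)) atTop (nhds 1) :=
    hΦ1.comp hz4
  have t6 : Tendsto (fun τ => stdNormalCDF (nnegZ2 σ q b S K τ)) atTop (nhds 1) :=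
    hΦ1.comp hz2
  have t7 : Tendsto (fun τ => stdNormalCDF (nnegZ2 σ q b S K τ - θ * σ * Real.sqrt τ))
      atTop (nhds 1) := hΦ1.comp hA7
  have texp : Tendsto (fun τ : ℝ => S * Real.exp (-q * τ)) atTop (nhds 0) := by
    have h1 : Tendsto (fun τ : ℝ => -q * τ) atTop atBot := by
      have h0 : Tendsto (fun τ : ℝ => q * τ) atTop atTop :=
        (tendsto_id : Tendsto (fun τ : ℝ => τ) atTop atTop).const_mul_atTop hq0
      exact Tendsto.congr (fun τ => by simp [Function.comp, neg_mul]) (tendsto_neg_atTop_atBot.comp h0)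
    simpa using (Real.tendsto_exp_atBot.comp h1).const_mul S
  have Hmain := ((((t1.const_mul K).sub (texp.mul t2)).sub (t3.const_mul b)).add
      (texp.mul t4)).add
    ((((t3.const_mul b).sub ((texp.mul_const ((b / S) ^ (1 + θ))).mul (t5.sub t6))).sub
      (t7.const_mul (K * ((K / b) ^ (θ - 1))))).const_mul (1 / θ))
  have hpow : K * (K / b) ^ (θ - 1) = b * (K / b) ^ θ := by
    rw [Real.rpow_sub hKb, Real.rpow_one]
    field_simp
  have hpoint : K + (b / θ) * (1 - θ - (K / b) ^ θ)
      = K * 1 - 0 * 0 - b * 1 + 0 * 0 + 1 / θ * (b * 1 - 0 * ((b / S) ^ (1 + θ)) * (1 - 1)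
          - K * ((K / b) ^ (θ - 1)) * 1) := by
    rw [mul_one (K * ((K / b) ^ (θ - 1))), hpow]
    field_simp
    ring
  constructor
  · rw [hpoint]
    simp only [nnegPrice]
    rw [← hθ]
    exact Hmain
  · have hx : (K / b) ^ θ < 1 :=
      Real.rpow_lt_one_of_one_lt_of_neg (by rw [lt_div_iff₀ hb]; linarith) hθ0
    have h1 : (0:ℝ) < 1 - θ - (K / b) ^ θ := by linarith
    have h2 : b / θ < 0 := div_neg_of_pos_of_neg hb hθ0
    nlinarith
end
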